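/- arXiv:2202.10214 — 10 statements merged into one kernel-verified Lean document; each statement's English description precedes it below -/
import Mathlib

section
/- Let z : Ty σ be a higher-order type in which every label occurs at most once, and let A, B be two distinct labels both occurring in z. Then there exists a unique subterm y of z (with respect to the reflexive-transitive closure of the immediate-subterm relation, where x is an immediate subterm of arrow x z' and of arrow z' x) such that y = arrow y₁ y₂ and either A occurs among the leaves of y₁ and B among the leaves of y₂, or B occurs among the leaves of y₁ and A among the leaves of y₂. -/
/-- Higher-order types over a type `σ` of elementary labels. -/
inductive Ty (σ : Type) : Type where
  | elem : σ → Ty σ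
  | arrow : Ty σ → Ty σ → Ty σ

namespace Ty

variable {σ : Type} [DecidableEq σ]

/-- The labels occurring in a type. -/
def leaves : Ty σ → Finset σ
  | elem A => {A}
  | arrow x y => leaves x ∪ leaves y

/-- Every label occurs at most once. -/
def NoDup : Ty σ → Prop
  | elem _ => True
  | arrow x y => NoDup x ∧ NoDup y ∧ Disjoint x.leaves y.leaves

/-- The pair (input labels, output labels) of a type. -/
def inOut : Ty σ → Finset σ × Finset σ
  | elem A => (∅, {A})
  | arrow x y => ((inOut x).2 ∪ (inOut y).1, (inOut x).1 ∪ (inOut y).2)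

/-- Input labels. -/
def ins (x : Ty σ) : Finset σ := (inOut x).1

/-- Output labels. -/
def outs (x : Ty σ) : Finset σ := (inOut x).2

/-- A bit assignment `b` is all-ones on a finite set `S` of labels. -/
def AllOnes (b : σ → Bool) (S : Finset σ) : Prop := ∀ i ∈ S, b i = true

/-- The set `D(x)` of bit assignments of a type. -/
def D : Ty σ → Set (σ → Bool)
  | elem A => {b | b A = false}
  | arrow x y => {b | b ∈ D y} ∪ {b | b ∉ D x ∧ ¬ AllOnes b x.leaves ∧ b ∉ D y}

/-- The immediate subterm relation. -/
inductive ImmSub : Ty σ → Ty σ → Prop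
  | left (x z : Ty σ) : ImmSub x (arrow x z)
  | right (x z : Ty σ) : ImmSub x (arrow z x)

/-- Subterms: reflexive-transitive closure of the immediate subterm relation. -/
def Subterm {σ : Type} : Ty σ → Ty σ → Prop := Relation.ReflTransGen ImmSub

/-- The critical set `S(x,A,B)`. -/
def Sset (x : Ty σ) (A B : σ) : Set (σ → Bool) :=
  {b | b A = false ∧ b B = false ∧ AllOnes b (x.outs \ {B})}

/-- `x` is no-signalling from `A` to `B`. -/
def NoSig (x : Ty σ) (A B : σ) : Prop := D x ∩ Sset x A B = ∅

/-- `x` is full-signalling from `A` to `B`. -/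
def FullSig (x : Ty σ) (A B : σ) : Prop :=
  ¬ ∃ b : σ → Bool, ¬ AllOnes b x.leaves ∧ b ∉ D x ∧ b A = false ∧ b B = false ∧
    AllOnes b (x.ins \ {A})

/-- A pairing on `x`: a finite set of pairs (input label, output label) with all first
components distinct and all second components distinct. -/
def IsPairing (x : Ty σ) (H : Finset (σ × σ)) : Prop :=
  (∀ p ∈ H, p.1 ∈ x.ins ∧ p.2 ∈ x.outs) ∧
  (∀ p ∈ H, ∀ q ∈ H, p.1 = q.1 → p = q) ∧
  (∀ p ∈ H, ∀ q ∈ H, p.2 = q.2 → p = q)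

/-- The critical set `S(x,H)` for a pairing `H`. -/
def SsetH (x : Ty σ) (H : Finset (σ × σ)) : Set (σ → Bool) :=
  {b | AllOnes b (x.outs \ H.image Prod.snd) ∧ (∀ p ∈ H, b p.1 = b p.2) ∧
    ∃ p ∈ H, b p.1 = false}

/-- The set `D(x ⊗ y)` for the tensor of two types with disjoint leaves. -/
def Dtensor (x y : Ty σ) : Set (σ → Bool) :=
  {b | b ∈ D x ∧ AllOnes b y.leaves} ∪ {b | b ∈ D y ∧ AllOnes b x.leaves} ∪ (D x ∩ D y)

/-- No-signalling from `A` to `B` for given data (set of bit assignments, output labels). -/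
def NoSigData (D0 : Set (σ → Bool)) (outs0 : Finset σ) (A B : σ) : Prop :=
  D0 ∩ {b | b A = false ∧ b B = false ∧ AllOnes b (outs0 \ {B})} = ∅

/-- Full-signalling from `A` to `B` for given data
(set of bit assignments, leaves, input labels). -/
def FullSigData (D0 : Set (σ → Bool)) (leaves0 ins0 : Finset σ) (A B : σ) : Prop :=
  ¬ ∃ b : σ → Bool, ¬ AllOnes b leaves0 ∧ b ∉ D0 ∧ b A = false ∧ b B = false ∧
    AllOnes b (ins0 \ {A})

end Ty

open Ty in
lemma subterm_leaves_subset {σ : Type} [DecidableEq σ] {w v : Ty σ} (h : Subterm w v) :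
    w.leaves ⊆ v.leaves := by
  induction h with
  | refl => exact subset_rfl
  | tail _ h₂ ih =>
    refine ih.trans ?_
    cases h₂ with
    | left _ => simp [Ty.leaves]
    | right _ => simp [Ty.leaves]

open Ty in
lemma subterm_arrow_cases {σ : Type} {w x y : Ty σ} (h : Subterm w (Ty.arrow x y)) :
    w = Ty.arrow x y ∨ Subterm w x ∨ Subterm w y := by
  rcases h.cases_tail with h | ⟨c, hc, hstep⟩
  · exact Or.inl h.symm
  · cases hstep with
    | left _ => exact Or.inr (Or.inl hc)
    | right _ => exact Or.inr (Or.inr hc)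

open Ty in
/-- existence and uniqueness of the minimal arrow subterm separating
two distinct labels occurring in a duplicate-free type. -/
theorem stmt0 {σ : Type} [DecidableEq σ] (z : Ty σ) (hz : z.NoDup)
    (A B : σ) (hAB : A ≠ B) (hA : A ∈ z.leaves) (hB : B ∈ z.leaves) :
    ∃! y : Ty σ, Subterm y z ∧ ∃ y₁ y₂ : Ty σ, y = Ty.arrow y₁ y₂ ∧
      ((A ∈ y₁.leaves ∧ B ∈ y₂.leaves) ∨ (B ∈ y₁.leaves ∧ A ∈ y₂.leaves)) := by
  induction z with
  | elem C =>
    simp [Ty.leaves] at hA hB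
    exact absurd (hA.trans hB.symm) hAB
  | arrow x y ihx ihy =>
    obtain ⟨hx, hy, hd⟩ := hz
    have hdl := Finset.disjoint_left.mp hd
    simp only [Ty.leaves, Finset.mem_union] at hA hB
    have memleaves : ∀ (C : σ) (y₁ y₂ : Ty σ),
        ((A ∈ y₁.leaves ∧ B ∈ y₂.leaves) ∨ (B ∈ y₁.leaves ∧ A ∈ y₂.leaves)) →
        C ∈ (Ty.arrow y₁ y₂).leaves → True := fun _ _ _ _ _ => trivial
    rcases hA with hAx | hAy <;> rcases hB with hBx | hBy
    · -- both in x
      obtain ⟨w, ⟨hws, hwdec⟩, huniq⟩ := ihx hx hAx hBx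
      refine ⟨w, ⟨hws.tail (ImmSub.left x y), hwdec⟩, ?_⟩
      rintro w' ⟨hw's, y₁, y₂, rfl, hmem⟩
      have hAw' : A ∈ (Ty.arrow y₁ y₂).leaves := by
        rcases hmem with ⟨h, _⟩ | ⟨_, h⟩ <;> simp [Ty.leaves, h]
      have hBw' : B ∈ (Ty.arrow y₁ y₂).leaves := by
        rcases hmem with ⟨_, h⟩ | ⟨h, _⟩ <;> simp [Ty.leaves, h]
      rcases subterm_arrow_cases hw's with heq | hsx | hsy
      · obtain ⟨rfl, rfl⟩ : y₁ = x ∧ y₂ = y := by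
          injection heq with h1 h2; exact ⟨h1, h2⟩
        rcases hmem with ⟨_, h2⟩ | ⟨_, h2⟩
        · exact absurd h2 (hdl hBx)
        · exact absurd h2 (hdl hAx)
      · exact huniq _ ⟨hsx, y₁, y₂, rfl, hmem⟩
      · exact absurd (subterm_leaves_subset hsy hAw') (hdl hAx)
    · -- A in x, B in y : witness is arrow x y
      refine ⟨Ty.arrow x y, ⟨Relation.ReflTransGen.refl,
        x, y, rfl, Or.inl ⟨hAx, hBy⟩⟩, ?_⟩
      rintro w' ⟨hw's, y₁, y₂, rfl, hmem⟩
      have hAw' : A ∈ (Ty.arrow y₁ y₂).leaves := by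
        rcases hmem with ⟨h, _⟩ | ⟨_, h⟩ <;> simp [Ty.leaves, h]
      have hBw' : B ∈ (Ty.arrow y₁ y₂).leaves := by
        rcases hmem with ⟨_, h⟩ | ⟨h, _⟩ <;> simp [Ty.leaves, h]
      rcases subterm_arrow_cases hw's with heq | hsx | hsy
      · exact heq
      · exact absurd hBy (hdl (subterm_leaves_subset hsx hBw'))
      · exact absurd (subterm_leaves_subset hsy hAw') (hdl hAx)
    · -- B in x, A in y : witness is arrow x y
      refine ⟨Ty.arrow x y, ⟨Relation.ReflTransGen.refl,
        x, y, rfl, Or.inr ⟨hBx, hAy⟩⟩, ?_⟩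
      rintro w' ⟨hw's, y₁, y₂, rfl, hmem⟩
      have hAw' : A ∈ (Ty.arrow y₁ y₂).leaves := by
        rcases hmem with ⟨h, _⟩ | ⟨_, h⟩ <;> simp [Ty.leaves, h]
      have hBw' : B ∈ (Ty.arrow y₁ y₂).leaves := by
        rcases hmem with ⟨_, h⟩ | ⟨h, _⟩ <;> simp [Ty.leaves, h]
      rcases subterm_arrow_cases hw's with heq | hsx | hsy
      · exact heq
      · exact absurd hAy (hdl (subterm_leaves_subset hsx hAw'))
      · exact absurd (subterm_leaves_subset hsy hBw') (hdl hBx)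
    · -- both in y
      obtain ⟨w, ⟨hws, hwdec⟩, huniq⟩ := ihy hy hAy hBy
      refine ⟨w, ⟨hws.tail (ImmSub.right y x), hwdec⟩, ?_⟩
      rintro w' ⟨hw's, y₁, y₂, rfl, hmem⟩
      have hAw' : A ∈ (Ty.arrow y₁ y₂).leaves := by
        rcases hmem with ⟨h, _⟩ | ⟨_, h⟩ <;> simp [Ty.leaves, h]
      have hBw' : B ∈ (Ty.arrow y₁ y₂).leaves := by
        rcases hmem with ⟨_, h⟩ | ⟨h, _⟩ <;> simp [Ty.leaves, h]
      rcases subterm_arrow_cases hw's with heq | hsx | hsy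
      · obtain ⟨rfl, rfl⟩ : y₁ = x ∧ y₂ = y := by
          injection heq with h1 h2; exact ⟨h1, h2⟩
        rcases hmem with ⟨h1, _⟩ | ⟨h1, _⟩
        · exact absurd hAy (hdl h1)
        · exact absurd hBy (hdl h1)
      · exact absurd hAy (hdl (subterm_leaves_subset hsx hAw'))
      · exact huniq _ ⟨hsy, y₁, y₂, rfl, hmem⟩
end

section
/- For every higher-order type x in which each label occurs at most once: (a) every bit assignment b ∈ D(x) satisfies b i = false for some i ∈ out(x) (no element of D(x) is all-ones on out(x)); and (b) every bit assignment b that is all-ones on in(x) but not all-ones on out(x) belongs to D(x). -/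
open Ty in
lemma ty_leaves_eq {σ : Type} [DecidableEq σ] (x : Ty σ) :
    x.ins ∪ x.outs = x.leaves := by
  induction x with
  | elem A => simp [ins, outs, inOut, leaves]
  | arrow a b iha ihb =>
      simp only [ins, outs, inOut, leaves] at *
      rw [← iha, ← ihb]; ac_rfl

open Ty in
/-- (a) no element of `D(x)` is all-ones on `out(x)`;
 (b) every bit assignment all-ones on `in(x)` but not all-ones on `out(x)` is in `D(x)`. -/
theorem stmt2 {σ : Type} [DecidableEq σ] (x : Ty σ) (hx : x.NoDup) :
    (∀ b ∈ D x, ∃ i ∈ x.outs, b i = false) ∧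
    (∀ b : σ → Bool, AllOnes b x.ins → ¬ AllOnes b x.outs → b ∈ D x) := by
  induction x with
  | elem A =>
      constructor
      · intro b hb
        exact ⟨A, by simp [outs, inOut], hb⟩
      · intro b _ hno
        simp [AllOnes, outs, inOut] at hno
        simpa [D] using hno
  | arrow x y ihx ihy =>
      obtain ⟨hx1, hx2, _⟩ := hx
      have Ix := ihx hx1
      have Iy := ihy hx2
      have hins : (arrow x y).ins = x.outs ∪ y.ins := rfl
      have houts : (arrow x y).outs = x.ins ∪ y.outs := rfl
      constructor
      · intro b hb
        rcases hb with hb | ⟨hbx, hnall, hby⟩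
        · obtain ⟨i, hi, hif⟩ := Iy.1 b hb
          exact ⟨i, by rw [houts]; exact Finset.mem_union_right _ hi, hif⟩
        · by_contra h
          push_neg at h
          have hall : AllOnes b (arrow x y).outs := by
            intro i hi
            have := h i hi
            cases hbi : b i with
            | false => exact absurd hbi this
            | true => rfl
          have hallxin : AllOnes b x.ins := fun i hi =>
            hall i (by rw [houts]; exact Finset.mem_union_left _ hi)
          have hnout : ¬ AllOnes b x.outs := by
            intro ho
            apply hnall
            intro i hi
            rw [← ty_leaves_eq] at hi
            rcases Finset.mem_union.mp hi with h' | h'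
            · exact hallxin i h'
            · exact ho i h'
          exact hbx (Ix.2 b hallxin hnout)
      · intro b hbin hbout
        have hxout : AllOnes b x.outs := fun i hi =>
          hbin i (by rw [hins]; exact Finset.mem_union_left _ hi)
        have hyin : AllOnes b y.ins := fun i hi =>
          hbin i (by rw [hins]; exact Finset.mem_union_right _ hi)
        by_cases hyo : AllOnes b y.outs
        · -- not all-ones on x.ins
          right
          have hxin : ¬ AllOnes b x.ins := by
            intro hxi
            apply hbout
            intro i hi
            rw [houts] at hi
            rcases Finset.mem_union.mp hi with h' | h'
            · exact hxi i h'
            · exact hyo i h'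
          refine ⟨?_, ?_, ?_⟩
          · intro hbD
            obtain ⟨i, hi, hif⟩ := Ix.1 b hbD
            simpa [hxout i hi] using hif
          · intro hl
            exact hxin (fun i hi => hl i (by rw [← ty_leaves_eq]; exact Finset.mem_union_left _ hi))
          · intro hbD
            obtain ⟨i, hi, hif⟩ := Iy.1 b hbD
            simpa [hyo i hi] using hif
        · left
          exact Iy.2 b hyin hyo
end

section
/- Let x be a higher-order type in which each label occurs at most once, A ∈ in(x) and B ∈ out(x). Then the following are equivalent: (i) every b ∈ D(x) with b A = b B satisfies b i = false for some i ∈ out(x) \ {B}; (ii) D(x) ∩ S(x,A,B) = ∅, where S(x,A,B) := {b | b A = false, b B = false, and b is all-ones on out(x) \ {B}}. -/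
open Ty in
lemma my_D_key {σ : Type} [DecidableEq σ] (x : Ty σ) (b : σ → Bool) :
    (b ∈ D x → ∃ i ∈ x.outs, b i = false) ∧
    (b ∉ D x → (∃ i ∈ x.ins, b i = false) ∨ AllOnes b x.leaves) := by
  induction x with
  | elem A =>
    constructor
    · intro hb
      exact ⟨A, by simp [outs, inOut], hb⟩
    · intro hb
      right
      intro i hi
      simp [leaves] at hi
      subst hi
      simpa [D] using hb
  | arrow x y ihx ihy =>
    have houts : (Ty.arrow x y).outs = x.ins ∪ y.outs := rfl
    have hins : (Ty.arrow x y).ins = x.outs ∪ y.ins := rfl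
    constructor
    · intro hb
      rcases hb with hb | ⟨hnx, hna, hny⟩
      · obtain ⟨i, hi, hbi⟩ := ihy.1 hb
        exact ⟨i, by rw [houts]; exact Finset.mem_union_right _ hi, hbi⟩
      · rcases ihx.2 hnx with ⟨i, hi, hbi⟩ | hall
        · exact ⟨i, by rw [houts]; exact Finset.mem_union_left _ hi, hbi⟩
        · exact absurd hall hna
    · intro hb
      simp only [D, Set.mem_union, Set.mem_setOf_eq, not_or, not_and_or, not_not] at hb
      obtain ⟨hny, h2⟩ := hb
      rcases h2 with hx | h2
      · obtain ⟨i, hi, hbi⟩ := ihx.1 hx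
        exact Or.inl ⟨i, by rw [hins]; exact Finset.mem_union_left _ hi, hbi⟩
      rcases h2 with hall | hy
      · rcases ihy.2 hny with ⟨i, hi, hbi⟩ | hally
        · exact Or.inl ⟨i, by rw [hins]; exact Finset.mem_union_right _ hi, hbi⟩
        · right
          intro i hi
          simp only [leaves, Finset.mem_union] at hi
          rcases hi with hi | hi
          · exact hall i hi
          · exact hally i hi
      · exact absurd hy hny

open Ty in
/-- equivalence of the elementwise no-signalling condition and the
emptiness of `D(x) ∩ S(x,A,B)`. -/
theorem stmt3 {σ : Type} [DecidableEq σ] (x : Ty σ) (hx : x.NoDup)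
    (A B : σ) (hA : A ∈ x.ins) (hB : B ∈ x.outs) :
    (∀ b ∈ D x, b A = b B → ∃ i ∈ x.outs \ {B}, b i = false) ↔
      D x ∩ Sset x A B = ∅ := by
  constructor
  · intro h
    ext b
    simp only [Set.mem_inter_iff, Set.mem_empty_iff_false, iff_false, not_and]
    intro hb hS
    obtain ⟨hbA, hbB, hall⟩ := hS
    obtain ⟨i, hi, hbi⟩ := h b hb (hbA.trans hbB.symm)
    exact absurd (hall i hi) (by simp [hbi])
  · intro h b hb hab
    by_contra hc
    push_neg at hc
    have hall : AllOnes b (x.outs \ {B}) := by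
      intro i hi
      have := hc i hi
      cases hbi : b i
      · exact absurd hbi this
      · rfl
    cases hbB : b B
    · have : b ∈ D x ∩ Sset x A B := ⟨hb, hab.trans hbB, hbB, hall⟩
      rw [h] at this
      exact this
    · obtain ⟨i, hi, hbi⟩ := (my_D_key x b).1 hb
      by_cases hiB : i = B
      · rw [hiB, hbB] at hbi
        exact absurd hbi (by simp)
      · have := hall i (Finset.mem_sdiff.mpr ⟨hi, by simpa using hiB⟩)
        rw [this] at hbi
        exact absurd hbi (by simp)
end

section
/- Let x be a higher-order type in which each label occurs at most once and let A ∈ in(x). If b ∈ D(x), then the bit assignment b′ defined by b′ A = true and b′ i = b i for i ≠ A also belongs to D(x). -/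
namespace Ty

variable {σ : Type} [DecidableEq σ]

lemma ins_subset_leaves (x : Ty σ) : x.ins ⊆ x.leaves ∧ x.outs ⊆ x.leaves := by
  induction x with
  | elem A => simp [ins, outs, inOut, leaves]
  | arrow x y ihx ihy =>
    constructor <;> intro i hi <;>
      simp only [ins, outs, inOut, leaves, Finset.mem_union] at hi ⊢
    · rcases hi with h | h
      · exact Or.inl (ihx.2 h)
      · exact Or.inr (ihy.1 h)
    · rcases hi with h | h
      · exact Or.inl (ihx.1 h)
      · exact Or.inr (ihy.2 h)

lemma allOnes_congr {b b' : σ → Bool} {S : Finset σ} (h : ∀ i ∈ S, b i = b' i) :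
    AllOnes b S ↔ AllOnes b' S := by
  constructor <;> intro ha i hi
  · rw [← h i hi]; exact ha i hi
  · rw [h i hi]; exact ha i hi

lemma D_congr (x : Ty σ) {b b' : σ → Bool} (h : ∀ i ∈ x.leaves, b i = b' i) :
    b ∈ D x ↔ b' ∈ D x := by
  induction x with
  | elem A =>
    simp only [leaves, Finset.mem_singleton, forall_eq] at h
    simp [D, h]
  | arrow x y ihx ihy =>
    simp only [leaves, Finset.mem_union] at h
    have hx := ihx fun i hi => h i (Or.inl hi)
    have hy := ihy fun i hi => h i (Or.inr hi)
    have ha : AllOnes b x.leaves ↔ AllOnes b' x.leaves :=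
      allOnes_congr fun i hi => h i (Or.inl hi)
    simp only [D, Set.mem_union, Set.mem_setOf_eq, hx, hy, ha]

lemma allOnes_notMem_D (x : Ty σ) {b : σ → Bool} (h : AllOnes b x.leaves) : b ∉ D x := by
  induction x with
  | elem A =>
    simp only [leaves, AllOnes, Finset.mem_singleton, forall_eq] at h
    simp [D, h]
  | arrow x y ihx ihy =>
    have hx : AllOnes b x.leaves := fun i hi => h i (by simp [leaves, hi])
    have hy : AllOnes b y.leaves := fun i hi => h i (by simp [leaves, hi])
    simp only [D, Set.mem_union, Set.mem_setOf_eq, not_or, not_and]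
    exact ⟨ihy hy, fun _ h2 => absurd hx h2⟩

/-- If `b` is all-ones except at one label `A` where it is `false`, then
`b ∈ D x` when `A` is an output, and `b ∉ D x` when `A` is an input. -/
lemma near_allOnes (x : Ty σ) (hx : x.NoDup) {A : σ} {b : σ → Bool}
    (hbA : b A = false) (h : AllOnes b (x.leaves \ {A})) :
    (A ∈ x.outs → b ∈ D x) ∧ (A ∈ x.ins → b ∉ D x) := by
  induction x with
  | elem B =>
    constructor
    · intro hA
      simp only [outs, inOut, Finset.mem_singleton] at hA
      simp [D, hA ▸ hbA]
    · intro hA; simp [ins, inOut] at hA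
  | arrow x y ihx ihy =>
    obtain ⟨hnx, hny, hdisj⟩ := hx
    have hxs : AllOnes b (x.leaves \ {A}) := fun i hi => by
      refine h i ?_
      simp only [Finset.mem_sdiff, leaves, Finset.mem_union] at hi ⊢
      exact ⟨Or.inl hi.1, hi.2⟩
    have hys : AllOnes b (y.leaves \ {A}) := fun i hi => by
      refine h i ?_
      simp only [Finset.mem_sdiff, leaves, Finset.mem_union] at hi ⊢
      exact ⟨Or.inr hi.1, hi.2⟩
    have ihx' := ihx hnx hxs
    have ihy' := ihy hny hys
    -- all-ones on whichever side doesn't contain A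
    have hAx : A ∉ x.leaves → AllOnes b x.leaves := by
      intro hA i hi
      refine hxs i (Finset.mem_sdiff.mpr ⟨hi, ?_⟩)
      simp only [Finset.mem_singleton]
      exact fun e => hA (e ▸ hi)
    have hAy : A ∉ y.leaves → AllOnes b y.leaves := by
      intro hA i hi
      refine hys i (Finset.mem_sdiff.mpr ⟨hi, ?_⟩)
      simp only [Finset.mem_singleton]
      exact fun e => hA (e ▸ hi)
    constructor
    · intro hA
      simp only [outs, inOut, Finset.mem_union] at hA
      rcases hA with hA | hA
      · -- A ∈ ins x : b ∉ D x, b all-ones on y, ¬ allones on x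
        have hAlx : A ∈ x.leaves := (ins_subset_leaves x).1 hA
        have hAly : A ∉ y.leaves := fun hc => (Finset.disjoint_left.mp hdisj hAlx) hc
        have h1 : b ∉ D x := ihx'.2 hA
        have h2 : b ∉ D y := allOnes_notMem_D y (hAy hAly)
        have h3 : ¬ AllOnes b x.leaves := fun ha => by
          have := ha A hAlx; simp [hbA] at this
        exact Or.inr ⟨h1, h3, h2⟩
      · exact Or.inl (ihy'.1 hA)
    · intro hA
      simp only [ins, inOut, Finset.mem_union] at hA
      simp only [D, Set.mem_union, Set.mem_setOf_eq, not_or, not_and, not_not]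
      rcases hA with hA | hA
      · -- A ∈ outs x : b ∈ D x, b all-ones on y so b ∉ D y
        have hAlx : A ∈ x.leaves := (ins_subset_leaves x).2 hA
        have hAly : A ∉ y.leaves := fun hc => (Finset.disjoint_left.mp hdisj hAlx) hc
        refine ⟨allOnes_notMem_D y (hAy hAly), fun h1 _ => absurd (ihx'.1 hA) h1⟩
      · -- A ∈ ins y : b ∉ D y, allones on x
        have hAly : A ∈ y.leaves := (ins_subset_leaves y).1 hA
        have hAlx : A ∉ x.leaves := fun hc => (Finset.disjoint_left.mp hdisj hc) hAly
        refine ⟨ihy'.2 hA, fun _ h2 => absurd (hAx hAlx) h2⟩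

lemma notMem_D_arrow (x y : Ty σ) (b : σ → Bool) :
    b ∉ D (arrow x y) ↔ b ∉ D y ∧ (b ∈ D x ∨ AllOnes b x.leaves) := by
  simp only [D, Set.mem_union, Set.mem_setOf_eq]
  tauto

lemma update_main (x : Ty σ) (hx : x.NoDup) (A : σ) (b : σ → Bool) :
    (A ∈ x.ins → b ∈ D x → Function.update b A true ∈ D x) ∧
    (A ∈ x.outs → b ∉ D x → Function.update b A true ∉ D x) := by
  by_cases hbA : b A = true
  · rw [show (true : Bool) = b A from hbA.symm, Function.update_eq_self]
    exact ⟨fun _ h => h, fun _ h => h⟩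
  have hbA' : b A = false := by simpa using hbA
  have hup : ∀ i, i ≠ A → Function.update b A true i = b i := fun i hi =>
    Function.update_of_ne hi _ _
  induction x with
  | elem B =>
    refine ⟨fun hA => by simp [ins, inOut] at hA, fun hA hb => ?_⟩
    simp only [outs, inOut, Finset.mem_singleton] at hA
    subst hA
    simp [D, Function.update_self]
  | arrow x y ihx ihy =>
    obtain ⟨hnx, hny, hdisj⟩ := hx
    have ihx' := ihx hnx
    have ihy' := ihy hny
    -- congruence for the side not containing A
    have cong : ∀ z : Ty σ, A ∉ z.leaves →
        ((b ∈ D z ↔ Function.update b A true ∈ D z) ∧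
         (AllOnes b z.leaves ↔ AllOnes (Function.update b A true) z.leaves)) := by
      intro z hAz
      have he : ∀ i ∈ z.leaves, b i = Function.update b A true i := fun i hi =>
        (hup i (fun e => hAz (e ▸ hi))).symm
      exact ⟨D_congr z he, allOnes_congr he⟩
    constructor
    · intro hA hb
      simp only [ins, inOut, Finset.mem_union] at hA
      simp only [D, Set.mem_union, Set.mem_setOf_eq] at hb ⊢
      rcases hA with hA | hA
      · -- A ∈ outs x
        have hAlx : A ∈ x.leaves := (ins_subset_leaves x).2 hA
        have hAly : A ∉ y.leaves := fun hc => (Finset.disjoint_left.mp hdisj hAlx) hc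
        rcases hb with hb | ⟨h1, h2, h3⟩
        · exact Or.inl ((cong y hAly).1.mp hb)
        · have h1' : Function.update b A true ∉ D x := ihx'.2 hA h1
          have h3' : Function.update b A true ∉ D y := fun hc => h3 ((cong y hAly).1.mpr hc)
          by_cases h2' : AllOnes (Function.update b A true) x.leaves
          · -- then b is near-all-ones with b A = false, A ∈ outs x, contradiction with h1
            exfalso
            apply h1
            refine (near_allOnes x hnx hbA' ?_).1 hA
            intro i hi
            simp only [Finset.mem_sdiff, Finset.mem_singleton] at hi
            rw [← hup i hi.2]
            exact h2' i hi.1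
          · exact Or.inr ⟨h1', h2', h3'⟩
      · -- A ∈ ins y
        have hAly : A ∈ y.leaves := (ins_subset_leaves y).1 hA
        have hAlx : A ∉ x.leaves := fun hc => (Finset.disjoint_left.mp hdisj hc) hAly
        rcases hb with hb | ⟨h1, h2, h3⟩
        · exact Or.inl (ihy'.1 hA hb)
        · by_cases hy' : Function.update b A true ∈ D y
          · exact Or.inl hy'
          · exact Or.inr ⟨fun hc => h1 ((cong x hAlx).1.mpr hc),
              fun hc => h2 ((cong x hAlx).2.mpr hc), hy'⟩
    · intro hA hb
      simp only [outs, inOut, Finset.mem_union] at hA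
      rw [notMem_D_arrow] at hb ⊢
      obtain ⟨hb1, hb2⟩ := hb
      rcases hA with hA | hA
      · -- A ∈ ins x
        have hAlx : A ∈ x.leaves := (ins_subset_leaves x).1 hA
        have hAly : A ∉ y.leaves := fun hc => (Finset.disjoint_left.mp hdisj hAlx) hc
        refine ⟨fun hc => hb1 ((cong y hAly).1.mpr hc), ?_⟩
        rcases hb2 with hbx | hax
        · exact Or.inl (ihx'.1 hA hbx)
        · refine Or.inr fun i hi => ?_
          by_cases hiA : i = A
          · subst hiA; simp [Function.update_self]
          · rw [hup i hiA]; exact hax i hi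
      · -- A ∈ outs y
        have hAly : A ∈ y.leaves := (ins_subset_leaves y).2 hA
        have hAlx : A ∉ x.leaves := fun hc => (Finset.disjoint_left.mp hdisj hc) hAly
        refine ⟨ihy'.2 hA hb1, ?_⟩
        rcases hb2 with hbx | hax
        · exact Or.inl ((cong x hAlx).1.mp hbx)
        · exact Or.inr ((cong x hAlx).2.mp hax)

end Ty

open Ty in
/-- flipping an input bit of an element of `D(x)` to `true` stays in `D(x)`. -/
theorem stmt4 {σ : Type} [DecidableEq σ] (x : Ty σ) (hx : x.NoDup)
    (A : σ) (hA : A ∈ x.ins) (b : σ → Bool) (hb : b ∈ D x) :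
    Function.update b A true ∈ D x := by
  exact (update_main x hx A b).1 hA hb
end

section
/- Let x be a higher-order type in which each label occurs at most once and let S ⊆ in(x). If b ∈ D(x), then the bit assignment b′ defined by b′ i = true for i ∈ S and b′ i = b i otherwise also belongs to D(x). -/
section Aux
open Ty
variable {σ : Type} [DecidableEq σ]

lemma Ty.mem_D_arrow (x y : Ty σ) (b : σ → Bool) :
    b ∈ D (arrow x y) ↔ b ∈ D y ∨ (b ∉ D x ∧ ¬ AllOnes b x.leaves ∧ b ∉ D y) := by
  simp [D, Set.mem_union, Set.mem_setOf_eq]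

lemma Ty.mem_D_elem (A : σ) (b : σ → Bool) : b ∈ D (elem A) ↔ b A = false := Iff.rfl

lemma Ty.ins_arrow (x y : Ty σ) : (arrow x y).ins = x.outs ∪ y.ins := rfl
lemma Ty.outs_arrow (x y : Ty σ) : (arrow x y).outs = x.ins ∪ y.outs := rfl
lemma Ty.ins_elem (A : σ) : (elem A : Ty σ).ins = ∅ := rfl
lemma Ty.outs_elem (A : σ) : (elem A : Ty σ).outs = {A} := rfl

lemma Ty.allOnes_union (b : σ → Bool) (s t : Finset σ) :
    AllOnes b (s ∪ t) ↔ AllOnes b s ∧ AllOnes b t := by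
  simp [AllOnes, Finset.mem_union, or_imp, forall_and]

lemma Ty.io_subset_leaves (x : Ty σ) : x.ins ⊆ x.leaves ∧ x.outs ⊆ x.leaves := by
  induction x with
  | elem A => simp [ins_elem, outs_elem, leaves]
  | arrow x y ihx ihy =>
    rw [ins_arrow, outs_arrow]
    constructor <;> simp only [leaves] <;>
      exact Finset.union_subset (Finset.Subset.trans (by tauto) Finset.subset_union_left)
        (Finset.Subset.trans (by tauto) Finset.subset_union_right)

lemma Ty.disj_io (x : Ty σ) : x.NoDup → Disjoint x.ins x.outs := by
  induction x with
  | elem A => intro _; simp [ins_elem]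
  | arrow x y ihx ihy =>
    intro hx
    obtain ⟨h1, h2, h3⟩ : x.NoDup ∧ y.NoDup ∧ Disjoint x.leaves y.leaves := hx
    rw [ins_arrow, outs_arrow]
    have xs := io_subset_leaves x
    have ys := io_subset_leaves y
    refine Finset.disjoint_union_left.2 ⟨Finset.disjoint_union_right.2 ⟨(ihx h1).symm, ?_⟩,
      Finset.disjoint_union_right.2 ⟨?_, ihy h2⟩⟩
    · exact h3.mono xs.2 ys.2
    · exact (h3.mono xs.1 ys.1).symm

lemma Ty.P45 (x : Ty σ) (b : σ → Bool) :
    (b ∉ D x → AllOnes b x.ins → AllOnes b x.leaves) ∧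
    (b ∈ D x → ¬ AllOnes b x.outs) := by
  induction x with
  | elem A =>
    constructor
    · intro hb _ i hi
      simp only [leaves, Finset.mem_singleton] at hi
      subst hi
      simpa [mem_D_elem] using hb
    · intro hb hA
      have := hA A (by simp [outs_elem])
      rw [mem_D_elem] at hb
      simp [hb] at this
  | arrow x y ihx ihy =>
    constructor
    · intro hb hins
      rw [ins_arrow, allOnes_union] at hins
      rw [mem_D_arrow] at hb
      push_neg at hb
      simp only [leaves, allOnes_union]
      have hy' : b ∉ D y := hb.1
      rcases Classical.em (b ∈ D x) with hx' | hx'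
      · exact absurd hins.1 (ihx.2 hx')
      · refine ⟨?_, ihy.1 hy' hins.2⟩
        by_contra hao
        exact hy' (hb.2 hx' hao)
    · intro hb houts
      rw [outs_arrow, allOnes_union] at houts
      rw [mem_D_arrow] at hb
      rcases hb with hb | ⟨hbx, hlx, _⟩
      · exact ihy.2 hb houts.2
      · exact hlx (ihx.1 hbx houts.1)

lemma Ty.allOnes_override (b : σ → Bool) (S : Finset σ) (s : Finset σ)
    (h : AllOnes b s) : AllOnes (fun i => if i ∈ S then true else b i) s := by
  intro i hi
  by_cases hiS : i ∈ S <;> simp [hiS, h i hi]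

lemma Ty.key (x : Ty σ) (S : Finset σ) (b : σ → Bool) : x.NoDup →
    ((∀ i ∈ S, i ∈ x.leaves → i ∈ x.ins) → b ∈ D x →
      (fun i => if i ∈ S then true else b i) ∈ D x) ∧
    ((∀ i ∈ S, i ∈ x.leaves → i ∈ x.outs) → b ∉ D x →
      (fun i => if i ∈ S then true else b i) ∉ D x) := by
  set b' : σ → Bool := fun i => if i ∈ S then true else b i with hb'
  induction x with
  | elem A =>
    intro _
    constructor
    · intro hS hb
      rw [mem_D_elem] at hb ⊢
      have hA : A ∉ S := by
        intro hA
        have := hS A hA (by simp [leaves])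
        simp [ins_elem] at this
      simp [hb', hA, hb]
    · intro _ hb
      rw [mem_D_elem] at hb ⊢
      simp only [hb', Bool.not_eq_false] at hb ⊢
      split <;> simp_all
  | arrow x y ihx ihy =>
    intro hx
    obtain ⟨h1, h2, h3⟩ : x.NoDup ∧ y.NoDup ∧ Disjoint x.leaves y.leaves := hx
    have ihx := ihx h1
    have ihy := ihy h2
    have xs := Ty.io_subset_leaves x
    have ys := Ty.io_subset_leaves y
    have hlvx : ∀ i, i ∈ x.leaves → i ∈ (arrow x y).leaves := by
      intro i hi; simp [leaves, hi]
    have hlvy : ∀ i, i ∈ y.leaves → i ∈ (arrow x y).leaves := by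
      intro i hi; simp [leaves, hi]
    constructor
    · intro hS hb
      have hSx : ∀ i ∈ S, i ∈ x.leaves → i ∈ x.outs := by
        intro i hiS hix
        have h := hS i hiS (hlvx i hix)
        rw [ins_arrow, Finset.mem_union] at h
        rcases h with h | h
        · exact h
        · exact absurd hix (Finset.disjoint_right.mp h3 (ys.1 h))
      have hSy : ∀ i ∈ S, i ∈ y.leaves → i ∈ y.ins := by
        intro i hiS hiy
        have h := hS i hiS (hlvy i hiy)
        rw [ins_arrow, Finset.mem_union] at h
        rcases h with h | h
        · exact absurd hiy (Finset.disjoint_right.mp h3.symm (xs.2 h))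
        · exact h
      rw [mem_D_arrow] at hb
      rw [mem_D_arrow]
      rcases hb with hb | ⟨hbx, hlx, _⟩
      · exact Or.inl (ihy.1 hSy hb)
      · rcases Classical.em (b' ∈ D y) with hy' | hy'
        · exact Or.inl hy'
        · refine Or.inr ⟨ihx.2 hSx hbx, ?_, hy'⟩
          have hni : ¬ AllOnes b x.ins := fun h => hlx ((Ty.P45 x b).1 hbx h)
          simp only [AllOnes, not_forall] at hni
          obtain ⟨i, hi, hbi⟩ := hni
          intro h
          have hiS : i ∉ S := by
            intro hiS
            exact absurd (hSx i hiS (xs.1 hi)) (Finset.disjoint_left.mp (Ty.disj_io x h1) hi)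
          have hii := h i (xs.1 hi)
          simp only [hb', hiS, if_neg] at hii
          exact hbi hii
    · intro hS hb
      have hSx : ∀ i ∈ S, i ∈ x.leaves → i ∈ x.ins := by
        intro i hiS hix
        have h := hS i hiS (hlvx i hix)
        rw [outs_arrow, Finset.mem_union] at h
        rcases h with h | h
        · exact h
        · exact absurd hix (Finset.disjoint_right.mp h3 (ys.2 h))
      have hSy : ∀ i ∈ S, i ∈ y.leaves → i ∈ y.outs := by
        intro i hiS hiy
        have h := hS i hiS (hlvy i hiy)
        rw [outs_arrow, Finset.mem_union] at h
        rcases h with h | h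
        · exact absurd hiy (Finset.disjoint_right.mp h3.symm (xs.1 h))
        · exact h
      rw [mem_D_arrow] at hb
      push_neg at hb
      rw [mem_D_arrow]
      push_neg
      have hby : b ∉ D y := hb.1
      refine ⟨ihy.2 hSy hby, ?_⟩
      intro hbx' hnao'
      exfalso
      rcases Classical.em (b ∈ D x) with hx' | hx'
      · exact hbx' (ihx.1 hSx hx')
      · rcases Classical.em (AllOnes b x.leaves) with hao | hao
        · exact hnao' (Ty.allOnes_override b S _ hao)
        · exact hby (hb.2 hx' hao)

end Aux

open Ty in
/-- setting any set of input bits of an element of `D(x)` to `true`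
stays in `D(x)`. -/
theorem stmt6 {σ : Type} [DecidableEq σ] (x : Ty σ) (hx : x.NoDup)
    (S : Finset σ) (hS : S ⊆ x.ins) (b : σ → Bool) (hb : b ∈ D x) :
    (fun i => if i ∈ S then true else b i) ∈ D x := by
  exact (Ty.key x S b hx).1 (fun i hi _ => hS hi) hb
end

section
/- Let x be a higher-order type in which each label occurs at most once and let H be a pairing on x. Then the following are equivalent: (i) every b ∈ D(x) with b A = b A' for all (A,A') ∈ H satisfies b i = false for some i ∈ out(x) \ out(H); (ii) D(x) ∩ S(x,H) = ∅. -/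
open Ty in
theorem D_key {σ : Type} [DecidableEq σ] (x : Ty σ) (b : σ → Bool) :
    (b ∈ D x → ∃ i ∈ x.outs, b i = false) ∧
    (b ∉ D x → ¬ AllOnes b x.leaves → ∃ i ∈ x.ins, b i = false) := by
  induction x with
  | elem A =>
    constructor
    · intro hb
      exact ⟨A, by simp [outs, inOut], hb⟩
    · intro hb hall
      exact absurd (fun i hi => by
        simp only [leaves, Finset.mem_singleton] at hi
        subst hi
        simpa [D] using hb) hall
  | arrow x y ihx ihy =>
    have houts : (Ty.arrow x y).outs = x.ins ∪ y.outs := rfl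
    have hins : (Ty.arrow x y).ins = x.outs ∪ y.ins := rfl
    constructor
    · intro hb
      rcases hb with hb | ⟨hnx, hnall, _⟩
      · obtain ⟨i, hi, hif⟩ := ihy.1 hb
        exact ⟨i, by rw [houts]; exact Finset.mem_union_right _ hi, hif⟩
      · obtain ⟨i, hi, hif⟩ := ihx.2 hnx hnall
        exact ⟨i, by rw [houts]; exact Finset.mem_union_left _ hi, hif⟩
    · intro hb hall
      have hny : b ∉ D y := fun h => hb (Or.inl h)
      have hcase : b ∈ D x ∨ AllOnes b x.leaves := by
        by_contra hc
        push_neg at hc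
        exact hb (Or.inr ⟨hc.1, hc.2, hny⟩)
      rcases hcase with hdx | hallx
      · obtain ⟨i, hi, hif⟩ := ihx.1 hdx
        exact ⟨i, by rw [hins]; exact Finset.mem_union_left _ hi, hif⟩
      · have : ¬ AllOnes b y.leaves := by
          intro hy
          exact hall (fun i hi => by
            rcases Finset.mem_union.mp hi with h | h
            exacts [hallx i h, hy i h])
        obtain ⟨i, hi, hif⟩ := ihy.2 hny this
        exact ⟨i, by rw [hins]; exact Finset.mem_union_right _ hi, hif⟩

open Ty in
/-- equivalence of the elementwise multi-contraction condition and the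
emptiness of `D(x) ∩ S(x,H)`. -/
theorem stmt8 {σ : Type} [DecidableEq σ] (x : Ty σ) (hx : x.NoDup)
    (H : Finset (σ × σ)) (hH : IsPairing x H) :
    (∀ b ∈ D x, (∀ p ∈ H, b p.1 = b p.2) →
        ∃ i ∈ x.outs \ H.image Prod.snd, b i = false) ↔
      D x ∩ SsetH x H = ∅ := by
  constructor
  · intro h
    ext b
    simp only [Set.mem_inter_iff, Set.mem_empty_iff_false, iff_false]
    rintro ⟨hbD, hall, hpairs, _, _, _⟩
    obtain ⟨i, hi, hif⟩ := h b hbD hpairs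
    simp [hall i hi] at hif
  · intro h b hbD hpairs
    by_contra hc
    push_neg at hc
    have hall : AllOnes b (x.outs \ H.image Prod.snd) := fun i hi => by
      have := hc i hi
      cases hb : b i
      · exact absurd hb this
      · rfl
    -- show there is p ∈ H with b p.1 = false, else b is all-ones on outs
    by_cases hex : ∃ p ∈ H, b p.1 = false
    · have : b ∈ D x ∩ SsetH x H := ⟨hbD, hall, hpairs, hex⟩
      rw [h] at this
      exact this
    · push_neg at hex
      have hallout : AllOnes b x.outs := by
        intro i hi
        by_cases hmem : i ∈ H.image Prod.snd
        · obtain ⟨p, hp, hpe⟩ := Finset.mem_image.mp hmem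
          have := hpairs p hp
          rw [← hpe, ← this]
          have := hex p hp
          cases hb : b p.1
          · exact absurd hb this
          · rfl
        · exact hall i (Finset.mem_sdiff.mpr ⟨hi, hmem⟩)
      obtain ⟨i, hi, hif⟩ := (D_key x b).1 hbD
      simp [hallout i hi] at hif
end

section
/- Let x be a higher-order type in which each label occurs at most once, A ∈ in(x), B ∈ out(x), and suppose x is full-signalling from A to B. Then for every type y with leaves disjoint from those of x: (a) arrow y x is full-signalling from A to B (here A ∈ in(arrow y x) and B ∈ out(arrow y x)); and (b) arrow x y is no-signalling from B to A (here B ∈ in(arrow x y) and A ∈ out(arrow x y)). -/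
namespace Ty

variable {σ : Type} [DecidableEq σ]

lemma allOnes_union' {b : σ → Bool} {S T : Finset σ} :
    AllOnes b (S ∪ T) ↔ AllOnes b S ∧ AllOnes b T := by
  simp only [AllOnes, Finset.mem_union]
  constructor
  · exact fun h => ⟨fun i hi => h i (Or.inl hi), fun i hi => h i (Or.inr hi)⟩
  · rintro ⟨h1, h2⟩ i (hi | hi)
    exacts [h1 i hi, h2 i hi]

lemma allOnes_mono' {b : σ → Bool} {S T : Finset σ} (h : S ⊆ T) :
    AllOnes b T → AllOnes b S := fun ha i hi => ha i (h hi)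

lemma ins_arrow' (x y : Ty σ) : (arrow x y).ins = x.outs ∪ y.ins := rfl

lemma outs_arrow' (x y : Ty σ) : (arrow x y).outs = x.ins ∪ y.outs := rfl

lemma leaves_eq' : ∀ z : Ty σ, z.leaves = z.ins ∪ z.outs
  | elem A => by simp [leaves, ins, outs, inOut]
  | arrow x y => by
      have hx := leaves_eq' x
      have hy := leaves_eq' y
      simp only [leaves, ins_arrow', outs_arrow', hx, hy]
      ext i
      simp only [Finset.mem_union]
      tauto

lemma D_arrow_mem {x y : Ty σ} {b : σ → Bool} :
    b ∈ D (arrow x y) ↔ b ∈ D y ∨ (b ∉ D x ∧ ¬ AllOnes b x.leaves ∧ b ∉ D y) := by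
  simp [D, Set.mem_union, Set.mem_setOf_eq]

lemma key' : ∀ (z : Ty σ) (b : σ → Bool),
    (b ∈ D z → ¬ AllOnes b z.outs) ∧
    (AllOnes b z.ins → ¬ AllOnes b z.outs → b ∈ D z)
  | elem A, b => by
      constructor
      · intro hb hall
        have h1 := hall A (by simp [outs, inOut])
        simp only [D, Set.mem_setOf_eq] at hb
        rw [hb] at h1
        exact Bool.false_ne_true h1
      · intro _ hno
        simp only [D, Set.mem_setOf_eq]
        by_contra h
        refine hno fun i hi => ?_
        simp only [outs, inOut, Finset.mem_singleton] at hi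
        subst hi
        simpa using h
  | arrow x y, b => by
      obtain ⟨ihx1, ihx2⟩ := key' x b
      obtain ⟨ihy1, ihy2⟩ := key' y b
      constructor
      · intro hb hall
        rw [outs_arrow', allOnes_union'] at hall
        rcases D_arrow_mem.mp hb with h | ⟨hnx, hnl, _⟩
        · exact ihy1 h hall.2
        · rw [leaves_eq', allOnes_union'] at hnl
          have houts : AllOnes b x.outs := by
            by_contra ho
            exact hnx (ihx2 hall.1 ho)
          exact hnl ⟨hall.1, houts⟩
      · intro hins hnouts
        rw [ins_arrow', allOnes_union'] at hins
        rw [outs_arrow'] at hnouts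
        by_cases hyo : AllOnes b y.outs
        · have hnxi : ¬ AllOnes b x.ins := fun h => hnouts (allOnes_union'.mpr ⟨h, hyo⟩)
          have hnl : ¬ AllOnes b x.leaves := by
            rw [leaves_eq', allOnes_union']
            exact fun h => hnxi h.1
          by_cases hDy : b ∈ D y
          · exact D_arrow_mem.mpr (Or.inl hDy)
          · refine D_arrow_mem.mpr (Or.inr ⟨fun hDx => ?_, hnl, hDy⟩)
            exact ihx1 hDx hins.1
        · exact D_arrow_mem.mpr (Or.inl (ihy2 hins.2 hyo))

lemma mem_D_not_allOnes_outs {z : Ty σ} {b : σ → Bool} (h : b ∈ D z) :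
    ¬ AllOnes b z.outs := (key' z b).1 h

end Ty

open Ty in
/-- if `x` is full-signalling from `A` to `B` then `arrow y x` is
full-signalling from `A` to `B` and `arrow x y` is no-signalling from `B` to `A`. -/
theorem stmt12 {σ : Type} [DecidableEq σ] (x : Ty σ) (hx : x.NoDup)
    (A B : σ) (hA : A ∈ x.ins) (hB : B ∈ x.outs) (hfs : FullSig x A B)
    (y : Ty σ) (hy : y.NoDup) (hdisj : Disjoint x.leaves y.leaves) :
    FullSig (Ty.arrow y x) A B ∧ NoSig (Ty.arrow x y) B A := by
  have hAx : A ∈ x.leaves := by rw [leaves_eq']; exact Finset.mem_union_left _ hA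
  have hBx : B ∈ x.leaves := by rw [leaves_eq']; exact Finset.mem_union_right _ hB
  constructor
  · -- FullSig (arrow y x) A B
    rintro ⟨b, hnl, hnD, hbA, hbB, hins⟩
    have hbDx : b ∉ D x := fun h => hnD (D_arrow_mem.mpr (Or.inl h))
    rw [ins_arrow'] at hins
    have hinsx : AllOnes b (x.ins \ {A}) := by
      refine allOnes_mono' ?_ hins
      intro i hi
      rw [Finset.mem_sdiff] at hi ⊢
      exact ⟨Finset.mem_union_right _ hi.1, hi.2⟩
    by_cases hall : AllOnes b x.leaves
    · have := hall A hAx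
      rw [hbA] at this
      exact Bool.false_ne_true this
    · exact hfs ⟨b, hall, hbDx, hbA, hbB, hinsx⟩
  · -- NoSig (arrow x y) B A
    rw [NoSig, Set.eq_empty_iff_forall_notMem]
    rintro b ⟨hbD, hbB, hbA, hall⟩
    rw [outs_arrow'] at hall
    have hAny : A ∉ y.leaves := fun h => (hdisj.forall_ne_finset hAx h) rfl
    have hyo : AllOnes b y.outs := by
      intro i hi
      refine hall i ?_
      rw [Finset.mem_sdiff, Finset.mem_singleton]
      refine ⟨Finset.mem_union_right _ hi, fun hiA => ?_⟩
      subst hiA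
      exact hAny (by rw [leaves_eq']; exact Finset.mem_union_right _ hi)
    have hinsx : AllOnes b (x.ins \ {A}) := by
      intro i hi
      rw [Finset.mem_sdiff] at hi
      exact hall i (Finset.mem_sdiff.mpr ⟨Finset.mem_union_left _ hi.1, hi.2⟩)
    rcases D_arrow_mem.mp hbD with h | ⟨hnx, hnlx, _⟩
    · exact mem_D_not_allOnes_outs h hyo
    · exact hfs ⟨b, hnlx, hnx, hbA, hbB, hinsx⟩
end

section
/- Let x be a higher-order type in which each label occurs at most once, A ∈ in(x), B ∈ out(x), and suppose x is no-signalling from A to B. Then for every type y with leaves disjoint from those of x: (a) arrow y x is no-signalling from A to B; and (b) arrow x y is full-signalling from B to A (here B ∈ in(arrow x y) and A ∈ out(arrow x y)). -/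
open Ty in
lemma aux_subset {σ : Type} [DecidableEq σ] (x : Ty σ) :
    x.ins ⊆ x.leaves ∧ x.outs ⊆ x.leaves := by
  induction x with
  | elem A => simp [ins, outs, inOut, leaves]
  | arrow u v ihu ihv =>
    constructor
    · show u.outs ∪ v.ins ⊆ u.leaves ∪ v.leaves
      exact Finset.union_subset (ihu.2.trans Finset.subset_union_left)
        (ihv.1.trans Finset.subset_union_right)
    · show u.ins ∪ v.outs ⊆ u.leaves ∪ v.leaves
      exact Finset.union_subset (ihu.1.trans Finset.subset_union_left)
        (ihv.2.trans Finset.subset_union_right)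

open Ty in
lemma aux_key {σ : Type} [DecidableEq σ] (x : Ty σ) :
    (∀ b, b ∉ D x → AllOnes b x.ins → AllOnes b x.leaves) ∧
    (∀ b, b ∈ D x → ¬ AllOnes b x.outs) := by
  induction x with
  | elem A =>
    constructor
    · intro b hb _ i hi
      simp only [leaves, Finset.mem_singleton] at hi
      subst hi
      simp only [D, Set.mem_setOf_eq] at hb
      simpa using hb
    · intro b hb hall
      simp only [D, Set.mem_setOf_eq] at hb
      have := hall A (by simp [outs, inOut])
      simp [this] at hb
  | arrow u v ihu ihv =>
    constructor
    · intro b hb hins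
      have hins' : AllOnes b (u.outs ∪ v.ins) := hins
      have hbv : b ∉ D v ∧ ¬ (b ∉ D u ∧ ¬ AllOnes b u.leaves ∧ b ∉ D v) := by
        simpa [D, not_or] using hb
      have hv : AllOnes b v.leaves :=
        ihv.1 b hbv.1 (fun j hj => hins' j (Finset.mem_union_right _ hj))
      have hu : AllOnes b u.leaves := by
        by_cases hdu : b ∈ D u
        · exact absurd (fun j hj => hins' j (Finset.mem_union_left _ hj)) (ihu.2 b hdu)
        · by_contra hno
          exact hbv.2 ⟨hdu, hno, hbv.1⟩
      intro i hi
      rcases Finset.mem_union.1 hi with h | h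
      · exact hu _ h
      · exact hv _ h
    · intro b hb hall
      have hall' : AllOnes b (u.ins ∪ v.outs) := hall
      rcases (by simpa [D] using hb : b ∈ D v ∨ (b ∉ D u ∧ ¬ AllOnes b u.leaves ∧ b ∉ D v)) with h | ⟨hnu, hnall, _⟩
      · exact ihv.2 b h (fun j hj => hall' j (Finset.mem_union_right _ hj))
      · exact hnall (ihu.1 b hnu (fun j hj => hall' j (Finset.mem_union_left _ hj)))


open Ty in
/-- if `x` is no-signalling from `A` to `B` then `arrow y x` is
no-signalling from `A` to `B` and `arrow x y` is full-signalling from `B` to `A`. -/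
theorem stmt13 {σ : Type} [DecidableEq σ] (x : Ty σ) (hx : x.NoDup)
    (A B : σ) (hA : A ∈ x.ins) (hB : B ∈ x.outs) (hns : NoSig x A B)
    (y : Ty σ) (hy : y.NoDup) (hdisj : Disjoint x.leaves y.leaves) :
    NoSig (Ty.arrow y x) A B ∧ FullSig (Ty.arrow x y) B A := by
  obtain ⟨hxi, hxo⟩ := aux_subset x
  obtain ⟨hyi, hyo⟩ := aux_subset y
  have hBy : B ∉ y.ins := fun h => Finset.disjoint_left.1 hdisj (hxo hB) (hyi h)
  constructor
  · rw [NoSig, Set.eq_empty_iff_forall_notMem]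
    rintro b ⟨hbD, hA', hB', hall⟩
    have hall' : AllOnes b ((y.ins ∪ x.outs) \ {B}) := hall
    rcases (by simpa [D, not_or] using hbD :
        b ∈ D x ∨ (b ∉ D y ∧ ¬ AllOnes b y.leaves ∧ b ∉ D x)) with h | ⟨hny, hnall, _⟩
    · have hmem : b ∈ D x ∩ Sset x A B := by
        refine ⟨h, hA', hB', fun j hj => ?_⟩
        rcases Finset.mem_sdiff.1 hj with ⟨hj1, hj2⟩
        exact hall' j (Finset.mem_sdiff.2 ⟨Finset.mem_union_right _ hj1, hj2⟩)
      rw [hns] at hmem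
      exact hmem
    · refine hnall ((aux_key y).1 b hny (fun j hj => hall' j ?_))
      refine Finset.mem_sdiff.2 ⟨Finset.mem_union_left _ hj, fun hc => ?_⟩
      exact hBy (by rwa [Finset.mem_singleton.1 hc] at hj)
  · rintro ⟨b, hnall, hbD, hB', hA', hins⟩
    have hins' : AllOnes b ((x.outs ∪ y.ins) \ {B}) := hins
    have hb' : b ∉ D y ∧ ¬ (b ∉ D x ∧ ¬ AllOnes b x.leaves ∧ b ∉ D y) := by
      simpa [D, not_or] using hbD
    have hnx : ¬ AllOnes b x.leaves := fun h => by simp [h A (hxi hA)] at hA'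
    have hdx : b ∈ D x := by
      by_contra h
      exact hb'.2 ⟨h, hnx, hb'.1⟩
    have hmem : b ∈ D x ∩ Sset x A B := by
      refine ⟨hdx, hA', hB', fun j hj => ?_⟩
      rcases Finset.mem_sdiff.1 hj with ⟨hj1, hj2⟩
      exact hins' j (Finset.mem_sdiff.2 ⟨Finset.mem_union_left _ hj1, hj2⟩)
    rw [hns] at hmem
    exact hmem
end

section
/- Let ι be a finite type and d : ι → ℕ. If b, b' : ι → Bool with b ≠ b', then for every X ∈ L(b) and Y ∈ L(b'), trace (X * Y) = 0; that is, the subspaces L(b) and L(b') are mutually orthogonal with respect to the Hilbert–Schmidt inner product (all their elements being Hermitian). -/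
/-- For a bit assignment `b : ι → Bool`, `Lspan d b` is the ℝ-linear span of all matrices of
the form `M g h = ∏ i, (f i) (g i) (h i)` where each `f i` is Hermitian, `f i = 1` whenever
`b i = true`, and `trace (f i) = 0` whenever `b i = false`. -/
noncomputable def Lspan {ι : Type} [Fintype ι] [DecidableEq ι] (d : ι → ℕ) (b : ι → Bool) :
    Submodule ℝ (Matrix ((i : ι) → Fin (d i)) ((i : ι) → Fin (d i)) ℂ) :=
  Submodule.span ℝ {M | ∃ f : (i : ι) → Matrix (Fin (d i)) (Fin (d i)) ℂ,
    (∀ i, (f i).IsHermitian) ∧ (∀ i, b i = true → f i = 1) ∧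
    (∀ i, b i = false → (f i).trace = 0) ∧
    M = Matrix.of fun g h => ∏ i, f i (g i) (h i)}

/-- The trace of a product of two "tensor product" matrices is the product of the traces
of the componentwise products. -/
lemma trace_gen {ι : Type} [Fintype ι] [DecidableEq ι] (d : ι → ℕ)
    (f f' : ∀ i, Matrix (Fin (d i)) (Fin (d i)) ℂ) :
    ((Matrix.of fun g h : (i : ι) → Fin (d i) => ∏ i, f i (g i) (h i)) *
      (Matrix.of fun g h : (i : ι) → Fin (d i) => ∏ i, f' i (g i) (h i))).trace
      = ∏ i, (f i * f' i).trace := by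
  classical
  have h1 : ∀ i, (f i * f' i).trace
      = ∑ p : Fin (d i) × Fin (d i), f i p.1 p.2 * f' i p.2 p.1 := by
    intro i
    simp [Matrix.trace, Matrix.mul_apply, Matrix.diag, Fintype.sum_prod_type,
      Finset.mul_sum, Finset.sum_mul]
  rw [Finset.prod_congr rfl (fun i _ => h1 i), Fintype.prod_sum]
  let e : (∀ i, Fin (d i) × Fin (d i)) ≃ ((∀ i, Fin (d i)) × (∀ i, Fin (d i))) :=
    { toFun := fun p => (fun i => (p i).1, fun i => (p i).2)
      invFun := fun gh i => (gh.1 i, gh.2 i)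
      left_inv := fun p => rfl
      right_inv := fun gh => rfl }
  rw [← Equiv.sum_comp e.symm (fun x => ∏ i, f i (x i).1 (x i).2 * f' i (x i).2 (x i).1)]
  simp only [Matrix.trace, Matrix.diag, Matrix.mul_apply, Matrix.of_apply]
  rw [Fintype.sum_prod_type]
  refine Finset.sum_congr rfl fun g _ => Finset.sum_congr rfl fun h _ => ?_
  rw [← Finset.prod_mul_distrib]
  rfl

/-- for distinct bit assignments `b ≠ b'`, the subspaces `L(b)` and `L(b')`
are orthogonal with respect to the Hilbert-Schmidt inner product: `trace (X * Y) = 0`. -/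
theorem stmt17 {ι : Type} [Fintype ι] [DecidableEq ι] (d : ι → ℕ) (b b' : ι → Bool) (hbb : b ≠ b')
    (X Y : Matrix ((i : ι) → Fin (d i)) ((i : ι) → Fin (d i)) ℂ)
    (hX : X ∈ Lspan d b) (hY : Y ∈ Lspan d b') :
    (X * Y).trace = 0 := by
  classical
  obtain ⟨i0, hi0⟩ := Function.ne_iff.mp hbb
  induction hX using Submodule.span_induction with
  | mem M hM =>
    induction hY using Submodule.span_induction with
    | mem N hN =>
      obtain ⟨f, hfH, hf1, hf0, rfl⟩ := hM
      obtain ⟨f', hf'H, hf'1, hf'0, rfl⟩ := hN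
      rw [trace_gen]
      refine Finset.prod_eq_zero (Finset.mem_univ i0) ?_
      cases hb : b i0 with
      | true =>
        have hb' : b' i0 = false := by
          cases hb'' : b' i0 with
          | true => exact absurd (hb.trans hb''.symm) hi0
          | false => rfl
        rw [hf1 i0 hb, one_mul, hf'0 i0 hb']
      | false =>
        have hb' : b' i0 = true := by
          cases hb'' : b' i0 with
          | true => rfl
          | false => exact absurd (hb.trans hb''.symm) hi0
        rw [hf'1 i0 hb', mul_one, hf0 i0 hb]
    | zero => simp
    | add Y₁ Y₂ _ _ h1 h2 => rw [Matrix.mul_add, Matrix.trace_add, h1, h2, add_zero]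
    | smul r Y₁ _ h1 => rw [Matrix.mul_smul, Matrix.trace_smul, h1, smul_zero]
  | zero => simp
  | add X₁ X₂ _ _ h1 h2 => rw [Matrix.add_mul, Matrix.trace_add, h1, h2, add_zero]
  | smul r X₁ _ h1 => rw [Matrix.smul_mul, Matrix.trace_smul, h1, smul_zero]
end

section
/- Let ι be a finite type, d : ι → ℕ, and j ≠ k in ι with h : d j = d k. Define the (j,k)-contraction of a matrix T indexed by (i : ι) → Fin (d i) to be the matrix C(T), indexed by (i : {i : ι // i ≠ j ∧ i ≠ k}) → Fin (d i), with C(T) g g' := ∑ over a, b : Fin (d j) of T (ĝ) (ĝ'), where ĝ extends g by ĝ j = a and ĝ k = Fin.cast h b, and ĝ' extends g' by ĝ' j = b and ĝ' k = Fin.cast h a. For a set S of functions ι → Bool, let C(S) be the set of restrictions to {i // i ≠ j ∧ i ≠ k} of those b ∈ S with b j = b k, and let L(S) (resp. L(C(S))) be the ℝ-span of the union of the spaces L(b) for b ∈ S (resp. for b ∈ C(S), over the restricted index set). Then T ∈ L(S) implies C(T) ∈ L(C(S)). -/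
/-- `L(S)`: the ℝ-span of the union of the spaces `L(b)` for `b ∈ S`. -/
noncomputable def LspanSet {ι : Type} [Fintype ι] [DecidableEq ι] (d : ι → ℕ)
    (S : Set (ι → Bool)) :
    Submodule ℝ (Matrix ((i : ι) → Fin (d i)) ((i : ι) → Fin (d i)) ℂ) :=
  ⨆ b ∈ S, Lspan d b

/-- Extension of an index function on `{i // i ≠ j ∧ i ≠ k}` to all of `ι` by prescribing
the values at `j` and `k`. -/
def extFun {ι : Type} [DecidableEq ι] (d : ι → ℕ) (j k : ι)
    (g : (i : {i : ι // i ≠ j ∧ i ≠ k}) → Fin (d i.1)) (a : Fin (d j)) (c : Fin (d k)) :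
    (i : ι) → Fin (d i) :=
  fun i =>
    if hj : i = j then Fin.cast (congrArg d hj).symm a
    else if hk : i = k then Fin.cast (congrArg d hk).symm c
    else g ⟨i, hj, hk⟩

/-- The `(j,k)`-contraction of a matrix. -/
noncomputable def contractM {ι : Type} [Fintype ι] [DecidableEq ι] (d : ι → ℕ)
    (j k : ι) (h : d j = d k)
    (T : Matrix ((i : ι) → Fin (d i)) ((i : ι) → Fin (d i)) ℂ) :
    Matrix ((i : {i : ι // i ≠ j ∧ i ≠ k}) → Fin (d i.1))
      ((i : {i : ι // i ≠ j ∧ i ≠ k}) → Fin (d i.1)) ℂ :=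
  Matrix.of fun g g' =>
    ∑ a : Fin (d j), ∑ b : Fin (d j),
      T (extFun d j k g a (Fin.cast h b)) (extFun d j k g' b (Fin.cast h a))

/-- The `(j,k)`-contraction of a set of bit assignments: restrictions to
`{i // i ≠ j ∧ i ≠ k}` of those `b ∈ S` with `b j = b k`. -/
def contractSet {ι : Type} (j k : ι) (S : Set (ι → Bool)) :
    Set ({i : ι // i ≠ j ∧ i ≠ k} → Bool) :=
  {b' | ∃ b ∈ S, b j = b k ∧ ∀ i : {i : ι // i ≠ j ∧ i ≠ k}, b' i = b i.1}

lemma extFun_j {ι : Type} [DecidableEq ι] (d : ι → ℕ) (j k : ι) (hjk : j ≠ k)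
    (g : (i : {i : ι // i ≠ j ∧ i ≠ k}) → Fin (d i.1)) (a : Fin (d j)) (c : Fin (d k)) :
    extFun d j k g a c j = a := by
  simp [extFun]

lemma extFun_k {ι : Type} [DecidableEq ι] (d : ι → ℕ) (j k : ι) (hjk : j ≠ k)
    (g : (i : {i : ι // i ≠ j ∧ i ≠ k}) → Fin (d i.1)) (a : Fin (d j)) (c : Fin (d k)) :
    extFun d j k g a c k = c := by
  simp [extFun, hjk.symm]

lemma extFun_other {ι : Type} [DecidableEq ι] (d : ι → ℕ) (j k : ι)
    (g : (i : {i : ι // i ≠ j ∧ i ≠ k}) → Fin (d i.1)) (a : Fin (d j)) (c : Fin (d k))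
    (i : {i : ι // i ≠ j ∧ i ≠ k}) :
    extFun d j k g a c i.1 = g i := by
  simp [extFun, i.2.1, i.2.2]

lemma prod_ext {ι : Type} [Fintype ι] [DecidableEq ι] (d : ι → ℕ) (j k : ι) (hjk : j ≠ k)
    (f : (i : ι) → Matrix (Fin (d i)) (Fin (d i)) ℂ)
    (g g' : (i : {i : ι // i ≠ j ∧ i ≠ k}) → Fin (d i.1))
    (a a' : Fin (d j)) (c c' : Fin (d k)) :
    ∏ i, f i (extFun d j k g a c i) (extFun d j k g' a' c' i)
      = f j a a' * f k c c' * ∏ i : {i : ι // i ≠ j ∧ i ≠ k}, f i.1 (g i) (g' i) := by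
  have hset : (Finset.univ : Finset ι)
      = insert j (insert k (Finset.univ.filter fun i => i ≠ j ∧ i ≠ k)) := by
    ext i
    by_cases hij : i = j <;> by_cases hik : i = k <;> simp_all
  have hjmem : j ∉ insert k (Finset.univ.filter fun i => i ≠ j ∧ i ≠ k) := by
    simp [hjk]
  have hkmem : k ∉ (Finset.univ.filter fun i => i ≠ j ∧ i ≠ k) := by simp
  rw [hset, Finset.prod_insert hjmem, Finset.prod_insert hkmem,
    extFun_j d j k hjk, extFun_j d j k hjk, extFun_k d j k hjk, extFun_k d j k hjk,
    mul_assoc]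
  congr 2
  rw [Finset.prod_subtype (Finset.univ.filter fun i : ι => i ≠ j ∧ i ≠ k)
    (p := fun i : ι => i ≠ j ∧ i ≠ k) (by simp)
    (fun i => f i (extFun d j k g a c i) (extFun d j k g' a' c' i))]
  exact Finset.prod_congr rfl fun i _ => by
    rw [extFun_other, extFun_other]

noncomputable def contractL {ι : Type} [Fintype ι] [DecidableEq ι] (d : ι → ℕ)
    (j k : ι) (h : d j = d k) :
    Matrix ((i : ι) → Fin (d i)) ((i : ι) → Fin (d i)) ℂ →ₗ[ℝ]
      Matrix ((i : {i : ι // i ≠ j ∧ i ≠ k}) → Fin (d i.1))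
        ((i : {i : ι // i ≠ j ∧ i ≠ k}) → Fin (d i.1)) ℂ where
  toFun := contractM d j k h
  map_add' T T' := by
    ext g g'
    simp [contractM, Finset.sum_add_distrib]
  map_smul' r T := by
    ext g g'
    simp [contractM, Finset.smul_sum]


/-- the `(j,k)`-contraction maps `L(S)` into `L(C(S))`. -/
theorem stmt18 {ι : Type} [Fintype ι] [DecidableEq ι] (d : ι → ℕ)
    (j k : ι) (hjk : j ≠ k) (h : d j = d k) (S : Set (ι → Bool))
    (T : Matrix ((i : ι) → Fin (d i)) ((i : ι) → Fin (d i)) ℂ)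
    (hT : T ∈ LspanSet d S) :
    contractM d j k h T ∈
      LspanSet (fun i : {i : ι // i ≠ j ∧ i ≠ k} => d i.1) (contractSet j k S) := by
  suffices H : LspanSet d S ≤
      (LspanSet (fun i : {i : ι // i ≠ j ∧ i ≠ k} => d i.1)
        (contractSet j k S)).comap (contractL d j k h) from H hT
  rw [LspanSet]
  apply iSup_le; intro b; apply iSup_le; intro hb
  rw [Lspan, Submodule.span_le]
  rintro M ⟨f, hherm, hone, htr, rfl⟩
  simp only [SetLike.mem_coe, Submodule.mem_comap]
  show contractM d j k h _ ∈ _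
  -- the scalar
  set c : ℂ := ∑ a : Fin (d j), ∑ b' : Fin (d j),
      f j a b' * f k (Fin.cast h b') (Fin.cast h a) with hc
  set M' : Matrix ((i : {i : ι // i ≠ j ∧ i ≠ k}) → Fin (d i.1))
      ((i : {i : ι // i ≠ j ∧ i ≠ k}) → Fin (d i.1)) ℂ :=
    Matrix.of fun g g' => ∏ i : {i : ι // i ≠ j ∧ i ≠ k}, f i.1 (g i) (g' i) with hM'
  have hcontr : contractM d j k h
      (Matrix.of fun g h => ∏ i, f i (g i) (h i)) = c.re • M' := by
    have hreal : (starRingEnd ℂ) c = c := by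
      rw [hc, map_sum]
      rw [Finset.sum_comm]
      apply Finset.sum_congr rfl; intro a _
      rw [map_sum]
      apply Finset.sum_congr rfl; intro b' _
      rw [map_mul, ← (hherm j).apply, ← (hherm k).apply]
      simp [mul_comm]
    have hcre : (c.re : ℂ) = c := Complex.conj_eq_iff_re.mp hreal
    ext g g'
    simp only [contractM, Matrix.of_apply, Matrix.smul_apply]
    rw [Complex.real_smul, hcre, hM']
    simp only [Matrix.of_apply]
    rw [hc, Finset.sum_mul]
    apply Finset.sum_congr rfl; intro a _
    rw [Finset.sum_mul]
    apply Finset.sum_congr rfl; intro b' _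
    exact prod_ext d j k hjk f g g' a b' (Fin.cast h b') (Fin.cast h a)
  rw [hcontr]
  by_cases hbjk : b j = b k
  · -- restricted bit function
    have hb' : (fun i : {i : ι // i ≠ j ∧ i ≠ k} => b i.1) ∈ contractSet j k S :=
      ⟨b, hb, hbjk, fun _ => rfl⟩
    have hM'mem : M' ∈ Lspan (fun i : {i : ι // i ≠ j ∧ i ≠ k} => d i.1)
        (fun i => b i.1) := by
      apply Submodule.subset_span
      exact ⟨fun i => f i.1, fun i => hherm i.1, fun i hbi => hone i.1 hbi,
        fun i hbi => htr i.1 hbi, rfl⟩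
    have hle : Lspan (fun i : {i : ι // i ≠ j ∧ i ≠ k} => d i.1) (fun i => b i.1) ≤
        LspanSet (fun i : {i : ι // i ≠ j ∧ i ≠ k} => d i.1) (contractSet j k S) :=
      le_iSup₂ (f := fun b' _ => Lspan (fun i : {i : ι // i ≠ j ∧ i ≠ k} => d i.1) b')
        (fun i => b i.1) hb'
    exact Submodule.smul_mem _ _ (hle hM'mem)
  · -- c = 0
    have hc0 : c = 0 := by
      rw [hc]
      cases hbj : b j
      · -- b j = false, so b k = true, f k = 1
        have hbk : b k = true := by
          cases hbk : b k
          · exact absurd (hbj.trans hbk.symm) hbjk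
          · rfl
        rw [hone k hbk]
        have : ∀ a b' : Fin (d j),
            f j a b' * (1 : Matrix (Fin (d k)) (Fin (d k)) ℂ) (Fin.cast h b') (Fin.cast h a)
            = f j a b' * if b' = a then 1 else 0 := by
          intro a b'
          congr 1
          rw [Matrix.one_apply]
          simp [Fin.cast, Fin.ext_iff]
        simp_rw [this]
        simp only [mul_ite, mul_one, mul_zero, Finset.sum_ite_eq', Finset.mem_univ, if_true]
        simpa [Matrix.trace, Matrix.diag] using htr j hbj
      · -- b j = true, f j = 1
        have hbk : b k = false := by
          cases hbk : b k
          · rfl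
          · exact absurd (hbj.trans hbk.symm) hbjk
        rw [hone j hbj]
        simp_rw [Matrix.one_apply, ite_mul, one_mul, zero_mul]
        rw [Finset.sum_comm]
        simp only [Finset.sum_ite_eq, Finset.sum_ite_eq', Finset.mem_univ, if_true]
        try rfl
        have h2 : ∑ b' : Fin (d j), f k (Fin.cast h b') (Fin.cast h b')
            = (f k).trace := by
          rw [Matrix.trace]
          exact Fintype.sum_equiv (finCongr h) _ _ fun b' => rfl
        rw [h2, htr k hbk]
    rw [hc0]
    simp
end
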